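/- arXiv:1505.00084 — 6 statements merged into one kernel-verified Lean document; each statement's English description precedes it below -/
import Mathlib

section
/- Let σ = [[1,0],[0,-1]] and τ = [[0,1],[1,0]] be the 2×2 Pauli matrices. For all real numbers α ≥ 0 and β ≥ 0, the function f(t) = trace(exp(t·α·σ + β·τ)) of the real variable t is exponentially convex. -/
/-!
The matrix `(t α) • σ + β • τ` is the complexification of the real matrix `t • D + B` with
`D = diagonal ![α, -α]` and `B = !![0, β; β, 0]`, whose entries are nonnegative. By Chernoff's
product formula `exp (t • D + B) = lim (exp (t • D / n) * (1 + B / n)) ^ n`. The entries of the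
factor are `exp (± α t / n)` times nonnegative constants, so the trace of its `n`-th power is a
nonnegative combination of exponentials `t ↦ exp (a t)`. Each kernel
`(t, s) ↦ exp (a (t + s)) = exp (a t) * exp (a s)` is positive semidefinite, and positive
semidefiniteness survives the pointwise limit.
-/

open Matrix NormedSpace ComplexOrder

noncomputable def pauliσ : Matrix (Fin 2) (Fin 2) ℂ := !![1, 0; 0, -1]

noncomputable def pauliτ : Matrix (Fin 2) (Fin 2) ℂ := !![0, 1; 1, 0]

def ExpConvex (f : ℝ → ℝ) : Prop :=
  Continuous f ∧ ∀ (N : ℕ) (t : Fin N → ℝ) (ξ : Fin N → ℂ),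
    0 ≤ ∑ r, ∑ s, (f (t r + t s) : ℂ) * ξ r * (starRingEnd ℂ) (ξ s)

open Filter Topology Asymptotics

section ProductFormula

variable {𝔸 : Type*} [NormedRing 𝔸]

theorem norm_pow_sub_pow_le [NormOneClass 𝔸] {a b : 𝔸} {M : ℝ} (ha : ‖a‖ ≤ M) (hb : ‖b‖ ≤ M)
    (n : ℕ) :
    ‖a ^ n - b ^ n‖ ≤ n * M ^ (n - 1) * ‖a - b‖ := by
  induction n with
  | zero => simp
  | succ n ih =>
    have hM : 0 ≤ M := (norm_nonneg a).trans ha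
    calc ‖a ^ (n + 1) - b ^ (n + 1)‖ = ‖a ^ n * (a - b) + (a ^ n - b ^ n) * b‖ := by
          congr 1; noncomm_ring
      _ ≤ ‖a ^ n‖ * ‖a - b‖ + ‖a ^ n - b ^ n‖ * ‖b‖ :=
          (norm_add_le _ _).trans (add_le_add (norm_mul_le _ _) (norm_mul_le _ _))
      _ ≤ M ^ n * ‖a - b‖ + n * M ^ (n - 1) * ‖a - b‖ * M := by
          gcongr
          exact (norm_pow_le a n).trans (pow_le_pow_left₀ (norm_nonneg a) ha n)
      _ = (n + 1 : ℕ) * M ^ (n + 1 - 1) * ‖a - b‖ := by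
          cases n <;> simp [pow_succ]; ring

variable [NormedAlgebra ℝ 𝔸]

theorem eventually_norm_apply_inv_le [NormOneClass 𝔸] {F : ℝ → 𝔸} {z : 𝔸} (h0 : F 0 = 1)
    (hF : HasDerivAt F z 0) :
    ∀ᶠ n : ℕ in atTop, ‖F (n : ℝ)⁻¹‖ ≤ Real.exp ((‖z‖ + 1) / n) := by
  have hlin : ∀ᶠ h in 𝓝 (0 : ℝ), ‖F h - 1 - h • z‖ ≤ 1 * ‖h‖ := by
    simpa [h0] using (hasDerivAt_iff_isLittleO_nhds_zero.mp hF).def one_pos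
  filter_upwards [tendsto_inv_atTop_nhds_zero_nat.eventually hlin] with n hn
  have hn0 : (0 : ℝ) ≤ (n : ℝ)⁻¹ := by positivity
  calc ‖F (n : ℝ)⁻¹‖ = ‖1 + (n : ℝ)⁻¹ • z + (F (n : ℝ)⁻¹ - 1 - (n : ℝ)⁻¹ • z)‖ := by
        congr 1; abel
    _ ≤ 1 + (n : ℝ)⁻¹ * ‖z‖ + (n : ℝ)⁻¹ := by
        refine (norm_add₃_le).trans ?_
        simp only [norm_one, norm_smul, Real.norm_of_nonneg hn0] at hn ⊢
        linarith
    _ = (‖z‖ + 1) / n + 1 := by ring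
    _ ≤ Real.exp ((‖z‖ + 1) / n) := Real.add_one_le_exp _

theorem tendsto_nat_mul_norm_sub {F G : ℝ → 𝔸} {z : 𝔸} (h0 : F 0 = G 0)
    (hF : HasDerivAt F z 0) (hG : HasDerivAt G z 0) :
    Tendsto (fun n : ℕ => n * ‖F (n : ℝ)⁻¹ - G (n : ℝ)⁻¹‖) atTop (𝓝 0) := by
  have hlo : (fun h => F h - G h) =o[𝓝 0] fun h : ℝ => h := by
    simpa [h0] using hasDerivAt_iff_isLittleO_nhds_zero.mp (hF.sub hG)
  have := ((hlo.comp_tendsto tendsto_inv_atTop_nhds_zero_nat).norm_left).tendsto_div_nhds_zero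
  simpa [div_eq_mul_inv, mul_comm] using this

/-- Chernoff's product formula. -/
theorem tendsto_pow_of_hasDerivAt_zero [NormOneClass 𝔸] [CompleteSpace 𝔸] {F : ℝ → 𝔸} {z : 𝔸}
    (h0 : F 0 = 1) (hF : HasDerivAt F z 0) :
    Tendsto (fun n : ℕ => F (n : ℝ)⁻¹ ^ n) atTop (𝓝 (exp z)) := by
  let _ : NormedAlgebra ℚ 𝔸 := NormedAlgebra.restrictScalars ℚ ℝ 𝔸
  set G : ℝ → 𝔸 := fun h => exp (h • z)
  have hG : HasDerivAt G z 0 := by simpa using hasDerivAt_exp_smul_const z (0 : ℝ)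
  have hG0 : G 0 = 1 := by simp [G]
  have hGpow : ∀ n : ℕ, n ≠ 0 → G (n : ℝ)⁻¹ ^ n = exp z := fun n hn => by
    rw [← NormedSpace.exp_nsmul, ← Nat.cast_smul_eq_nsmul ℝ, smul_smul,
      mul_inv_cancel₀ (Nat.cast_ne_zero.mpr hn), one_smul]
  set C := ‖z‖ + 1
  have hbound : ∀ᶠ n : ℕ in atTop,
      ‖F (n : ℝ)⁻¹ ^ n - exp z‖ ≤ Real.exp C * (n * ‖F (n : ℝ)⁻¹ - G (n : ℝ)⁻¹‖) := by
    filter_upwards [eventually_norm_apply_inv_le h0 hF, eventually_norm_apply_inv_le hG0 hG,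
      eventually_ne_atTop 0] with n hFn hGn hn
    have hM : (1 : ℝ) ≤ Real.exp (C / n) := Real.one_le_exp (by positivity)
    have hMn : Real.exp (C / n) ^ (n - 1) ≤ Real.exp C := calc
      _ ≤ Real.exp (C / n) ^ n := pow_le_pow_right₀ hM (Nat.sub_le n 1)
      _ = Real.exp C := by
        rw [← Real.exp_nat_mul, mul_div_cancel₀ _ (Nat.cast_ne_zero.mpr hn)]
    rw [← hGpow n hn]
    calc _ ≤ n * Real.exp (C / n) ^ (n - 1) * ‖F (n : ℝ)⁻¹ - G (n : ℝ)⁻¹‖ :=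
          norm_pow_sub_pow_le hFn hGn n
      _ ≤ n * Real.exp C * ‖F (n : ℝ)⁻¹ - G (n : ℝ)⁻¹‖ := by gcongr
      _ = _ := by ring
  rw [tendsto_iff_norm_sub_tendsto_zero]
  refine squeeze_zero' (Eventually.of_forall fun _ => norm_nonneg _) hbound ?_
  simpa using (tendsto_nat_mul_norm_sub (hG0 ▸ h0) hF hG).const_mul (Real.exp C)

end ProductFormula

def IsHankelPosSemidef (g : ℝ → ℝ) : Prop :=
  ∀ (N : ℕ) (t : Fin N → ℝ) (ξ : Fin N → ℂ),
    0 ≤ ∑ r, ∑ s, (g (t r + t s) : ℂ) * ξ r * (starRingEnd ℂ) (ξ s)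

theorem IsHankelPosSemidef.of_tendsto {ι : Type*} {l : Filter ι} [l.NeBot] {g : ι → ℝ → ℝ}
    {f : ℝ → ℝ} (hg : ∀ n, IsHankelPosSemidef (g n))
    (hlim : ∀ u, Tendsto (fun n => g n u) l (𝓝 (f u))) : IsHankelPosSemidef f := by
  intro N t ξ
  have hform : Tendsto (fun n => ∑ r, ∑ s, (g n (t r + t s) : ℂ) * ξ r * (starRingEnd ℂ) (ξ s))
      l (𝓝 (∑ r, ∑ s, (f (t r + t s) : ℂ) * ξ r * (starRingEnd ℂ) (ξ s))) :=
    tendsto_finsetSum _ fun r _ => tendsto_finsetSum _ fun s _ =>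
      (((Complex.continuous_ofReal.tendsto _).comp (hlim _)).mul_const _).mul_const _
  exact ge_of_tendsto' hform fun n => hg n N t ξ

def posExpSums : Subsemiring (ℝ → ℝ) where
  carrier := {g | ∃ (ι : Type) (_ : Fintype ι) (c a : ι → ℝ),
    0 ≤ c ∧ g = fun u => ∑ i, c i * Real.exp (a i * u)}
  zero_mem' := ⟨Empty, inferInstance, 0, 0, le_rfl, by ext; simp⟩
  one_mem' := ⟨Unit, inferInstance, 1, 0, zero_le_one, by ext; simp⟩
  add_mem' := by
    rintro _ _ ⟨ι, _, c, a, hc, rfl⟩ ⟨κ, _, d, b, hd, rfl⟩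
    refine ⟨ι ⊕ κ, inferInstance, Sum.elim c d, Sum.elim a b,
      fun i => by cases i; exacts [hc _, hd _], ?_⟩
    ext u
    simp [Fintype.sum_sum_type]
  mul_mem' := by
    rintro _ _ ⟨ι, _, c, a, hc, rfl⟩ ⟨κ, _, d, b, hd, rfl⟩
    refine ⟨ι × κ, inferInstance, fun p => c p.1 * d p.2, fun p => a p.1 + b p.2,
      fun p => mul_nonneg (hc _) (hd _), ?_⟩
    ext u
    simp only [Pi.mul_apply, Finset.sum_mul_sum, ← Finset.univ_product_univ, Finset.sum_product,
      add_mul, Real.exp_add]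
    refine Finset.sum_congr rfl fun i _ => Finset.sum_congr rfl fun j _ => ?_
    ring

theorem mul_exp_mem_posExpSums {c : ℝ} (hc : 0 ≤ c) (a : ℝ) :
    (fun u => c * Real.exp (a * u)) ∈ posExpSums :=
  ⟨Unit, inferInstance, fun _ => c, fun _ => a, fun _ => hc, by ext; simp⟩

theorem isHankelPosSemidef_of_mem_posExpSums {g : ℝ → ℝ} (hg : g ∈ posExpSums) :
    IsHankelPosSemidef g := by
  obtain ⟨ι, _, c, a, hc, rfl⟩ := hg
  intro N t ξ
  set v : ι → ℂ := fun i => ∑ r, (Real.exp (a i * t r) : ℂ) * ξ r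
  have hsum : ∑ r, ∑ s, ((∑ i, c i * Real.exp (a i * (t r + t s)) : ℝ) : ℂ) * ξ r *
      (starRingEnd ℂ) (ξ s) = ∑ i, (c i : ℂ) * (v i * (starRingEnd ℂ) (v i)) := by
    calc _ = ∑ r, ∑ s, ∑ i, (c i : ℂ) * ((Real.exp (a i * t r) : ℂ) * ξ r) *
          (starRingEnd ℂ) ((Real.exp (a i * t s) : ℂ) * ξ s) := by
          refine Finset.sum_congr rfl fun r _ => Finset.sum_congr rfl fun s _ => ?_
          simp only [Complex.ofReal_sum, Finset.sum_mul, map_mul, Complex.conj_ofReal]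
          refine Finset.sum_congr rfl fun i _ => ?_
          rw [mul_add, Real.exp_add]
          push_cast
          ring
      _ = ∑ i, ∑ r, ∑ s, (c i : ℂ) * ((Real.exp (a i * t r) : ℂ) * ξ r) *
          (starRingEnd ℂ) ((Real.exp (a i * t s) : ℂ) * ξ s) :=
          (Finset.sum_congr rfl fun r _ => Finset.sum_comm).trans Finset.sum_comm
      _ = _ := by
          simp only [v, map_sum, Finset.sum_mul_sum]
          simp only [Finset.mul_sum, mul_assoc]
  rw [hsum]
  exact Finset.sum_nonneg fun i _ =>
    mul_nonneg (Complex.zero_le_real.mpr (hc i)) (mul_star_self_nonneg (v i))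

theorem Matrix.pow_apply_mem {X R ι : Type*} [Semiring R] [Fintype ι] [DecidableEq ι]
    (S : Subsemiring (X → R)) {M : X → Matrix ι ι R} (hM : ∀ i j, (fun x => M x i j) ∈ S)
    (n : ℕ) (i j : ι) : (fun x => (M x ^ n) i j) ∈ S := by
  induction n generalizing j with
  | zero =>
    by_cases h : i = j
    · simp only [h, pow_zero, one_apply_eq]
      exact S.one_mem
    · simp only [pow_zero, one_apply_ne h]
      exact S.zero_mem
  | succ n ih =>
    have hsucc : (fun x => (M x ^ (n + 1)) i j)
        = ∑ k, (fun x => (M x ^ n) i k) * fun x => M x k j := by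
      ext x
      simp [pow_succ, Matrix.mul_apply]
    rw [hsucc]
    exact S.sum_mem fun k _ => S.mul_mem (ih k) (hM k j)

theorem Matrix.trace_pow_mem {X R ι : Type*} [Semiring R] [Fintype ι] [DecidableEq ι]
    (S : Subsemiring (X → R)) {M : X → Matrix ι ι R} (hM : ∀ i j, (fun x => M x i j) ∈ S)
    (n : ℕ) : (fun x => (M x ^ n).trace) ∈ S := by
  have htrace : (fun x => (M x ^ n).trace) = ∑ i, fun x => (M x ^ n) i i := by
    ext x
    simp [Matrix.trace]
  rw [htrace]
  exact S.sum_mem fun i _ => Matrix.pow_apply_mem S hM n i i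

section TraceExp

attribute [local instance] Matrix.linftyOpNormedAddCommGroup Matrix.linftyOpNormedRing
  Matrix.linftyOpNormedAlgebra Matrix.linfty_opNormOneClass

variable {ι : Type*} [Fintype ι] [DecidableEq ι]

theorem exp_smul_diagonal (h : ℝ) (d : ι → ℝ) :
    exp (h • diagonal d) = diagonal fun i => Real.exp (h * d i) := by
  rw [← diagonal_smul, Matrix.exp_diagonal]
  congr 1
  ext i
  simp [Real.exp_eq_exp_ℝ]

theorem isHankelPosSemidef_trace_exp [Nonempty ι] (d : ι → ℝ) {B : Matrix ι ι ℝ}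
    (hB : ∀ i j, 0 ≤ B i j) :
    IsHankelPosSemidef fun u => (exp (u • diagonal d + B)).trace := by
  set F : ℝ → ℝ → Matrix ι ι ℝ := fun u h => exp (h • u • diagonal d) * (1 + h • B)
  have hF : ∀ u, HasDerivAt (F u) (u • diagonal d + B) 0 := fun u => by
    have h := (hasDerivAt_exp_smul_const (u • diagonal d) (0 : ℝ)).mul
      (((hasDerivAt_id (0 : ℝ)).smul_const B).const_add 1)
    simp only [zero_smul, exp_zero, one_mul, id, add_zero, mul_one, one_smul] at h
    exact h
  have hlim : ∀ u, Tendsto (fun n : ℕ => (F u (n : ℝ)⁻¹ ^ n).trace) atTop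
      (𝓝 (exp (u • diagonal d + B)).trace) := fun u =>
    (continuous_id.matrix_trace.tendsto _).comp
      (tendsto_pow_of_hasDerivAt_zero (by simp [F]) (hF u))
  refine IsHankelPosSemidef.of_tendsto (fun n => isHankelPosSemidef_of_mem_posExpSums ?_) hlim
  refine Matrix.trace_pow_mem posExpSums (fun i j => ?_) n
  have hcoef : 0 ≤ (1 + (n : ℝ)⁻¹ • B) i j := by
    rw [Matrix.add_apply, Matrix.smul_apply, smul_eq_mul, one_apply]
    exact add_nonneg (by split_ifs <;> norm_num) (mul_nonneg (by positivity) (hB i j))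
  have hentry : (fun u => F u (n : ℝ)⁻¹ i j)
      = fun u => (1 + (n : ℝ)⁻¹ • B) i j * Real.exp ((n : ℝ)⁻¹ * d i * u) := by
    ext u
    simp only [F, smul_smul, exp_smul_diagonal, diagonal_mul]
    ring_nf
  rw [hentry]
  exact mul_exp_mem_posExpSums hcoef _

theorem continuous_trace_exp (A B : Matrix ι ι ℝ) :
    Continuous fun u : ℝ => (exp (u • A + B)).trace :=
  (exp_continuous.comp ((continuous_id.smul continuous_const).add continuous_const)).matrix_trace

theorem expConvex_trace_exp [Nonempty ι] (d : ι → ℝ) {B : Matrix ι ι ℝ}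
    (hB : ∀ i j, 0 ≤ B i j) : ExpConvex fun u => (exp (u • diagonal d + B)).trace :=
  ⟨continuous_trace_exp _ _, isHankelPosSemidef_trace_exp d hB⟩

theorem trace_exp_map_ofReal (A : Matrix ι ι ℝ) :
    (exp (A.map ((↑) : ℝ → ℂ))).trace = ((exp A).trace : ℂ) := by
  have hmap := map_exp (Complex.ofRealHom.mapMatrix (m := ι))
    (continuous_id.matrix_map Complex.continuous_ofReal) A
  exact (congrArg trace hmap).symm.trans (AddMonoidHom.map_trace Complex.ofRealHom (exp A)).symm

end TraceExp

theorem smul_pauliσ_add_smul_pauliτ (t α β : ℝ) :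
    ((t * α : ℝ) : ℂ) • pauliσ + (β : ℂ) • pauliτ
      = (t • diagonal ![α, -α] + !![0, β; β, 0]).map ((↑) : ℝ → ℂ) := by
  ext i j
  fin_cases i <;> fin_cases j <;> simp [pauliσ, pauliτ]

theorem stmt0_general (α β : ℝ) (hβ : 0 ≤ β) :
    (∀ t : ℝ, ((exp (((t * α : ℝ) : ℂ) • pauliσ + (β : ℂ) • pauliτ)).trace).im = 0) ∧
    ExpConvex (fun t : ℝ =>
      ((exp (((t * α : ℝ) : ℂ) • pauliσ + (β : ℂ) • pauliτ)).trace).re) := by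
  have htrace : ∀ t : ℝ, (exp (((t * α : ℝ) : ℂ) • pauliσ + (β : ℂ) • pauliτ)).trace
      = ((exp (t • diagonal ![α, -α] + !![0, β; β, 0])).trace : ℂ) := fun t => by
    rw [smul_pauliσ_add_smul_pauliτ, trace_exp_map_ofReal]
  refine ⟨fun t => by rw [htrace, Complex.ofReal_im], ?_⟩
  simp only [htrace, Complex.ofReal_re]
  exact expConvex_trace_exp ![α, -α] fun i j => by fin_cases i <;> fin_cases j <;> simp [hβ]

theorem stmt0 (α β : ℝ) (hα : 0 ≤ α) (hβ : 0 ≤ β) :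
    (∀ t : ℝ, ((exp (((t * α : ℝ) : ℂ) • pauliσ + (β : ℂ) • pauliτ)).trace).im = 0) ∧
    ExpConvex (fun t : ℝ =>
      ((exp (((t * α : ℝ) : ℂ) • pauliσ + (β : ℂ) • pauliτ)).trace).re) :=
  stmt0_general α β hβ
end

section
/- For all real numbers a ≥ 0 and b ≥ 0, the function f(t) = cosh(√(a·t² + b)) of the real variable t is exponentially convex. -/
/-!
Exponential convexity follows from positive semidefiniteness of the real Hankel forms
`∑ f (t r + t s) c r c s`, a property closed under sums, nonnegative multiples, rescaling the
variable, convergent series and integrals; `x ↦ exp (x * u)` has it because the form is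
a square. Expanding `cosh √(x ^ 2 + b) = ∑ₖ (x ^ 2 + b) ^ k / (2k)!` binomially and summing over
the powers of `b` first gives
`cosh √(x ^ 2 + b) = cosh x + ∑ⱼ bʲ⁺¹ / (4ʲ⁺¹ (j+1)! j!) ∫₋₁¹ (1 - u²)ʲ exp (x u) du`,
because the even moments of `(1 - u²)ʲ` on `[-1, 1]` are explicit ratios of factorials. Every
term is positive semidefinite when `b ≥ 0`, and the substitution `x = √a t` finishes the proof.
-/

open ComplexOrder

open MeasureTheory Finset Real Set
open scoped Nat

def IsAddPosSemidef (f : ℝ → ℝ) : Prop :=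
  ∀ (N : ℕ) (t c : Fin N → ℝ), 0 ≤ ∑ r, ∑ s, f (t r + t s) * c r * c s

namespace IsAddPosSemidef

variable {f g : ℝ → ℝ}

lemma of_map_add_eq_mul (h : ∀ x y, f (x + y) = g x * g y) : IsAddPosSemidef f := by
  intro N t c
  have : ∑ r, ∑ s, f (t r + t s) * c r * c s = (∑ r, g (t r) * c r) ^ 2 := by
    simp only [sq, sum_mul_sum, h]
    exact sum_congr rfl fun r _ => sum_congr rfl fun s _ => by ring
  exact this ▸ sq_nonneg _

lemma add (hf : IsAddPosSemidef f) (hg : IsAddPosSemidef g) : IsAddPosSemidef (f + g) := by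
  intro N t c
  simpa only [Pi.add_apply, add_mul, sum_add_distrib] using add_nonneg (hf N t c) (hg N t c)

lemma const_mul (hf : IsAddPosSemidef f) {a : ℝ} (ha : 0 ≤ a) :
    IsAddPosSemidef (fun x => a * f x) := by
  intro N t c
  simpa only [mul_assoc, ← mul_sum] using mul_nonneg ha (hf N t c)

lemma comp_mul_left (hf : IsAddPosSemidef f) (a : ℝ) : IsAddPosSemidef (fun x => f (a * x)) := by
  intro N t c
  simpa only [mul_add] using hf N (fun r => a * t r) c

lemma of_hasSum {ι : Type*} {F : ι → ℝ → ℝ} (hF : ∀ i, IsAddPosSemidef (F i))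
    (h : ∀ x, HasSum (fun i => F i x) (f x)) : IsAddPosSemidef f := by
  intro N t c
  exact (hasSum_sum fun r _ => hasSum_sum fun s _ => ((h _).mul_right _).mul_right _).nonneg
    fun i => hF i N t c

lemma integral {α : Type*} [MeasurableSpace α] {μ : Measure α} {F : α → ℝ → ℝ}
    (hF : ∀ᵐ u ∂μ, IsAddPosSemidef (F u)) (hint : ∀ x, Integrable (fun u => F u x) μ) :
    IsAddPosSemidef (fun x => ∫ u, F u x ∂μ) := by
  intro N t c
  have hint' : ∀ r s, Integrable (fun u => F u (t r + t s) * c r * c s) μ :=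
    fun r s => ((hint _).mul_const _).mul_const _
  have : ∑ r, ∑ s, (∫ u, F u (t r + t s) ∂μ) * c r * c s
      = ∫ u, ∑ r, ∑ s, F u (t r + t s) * c r * c s ∂μ := by
    rw [integral_finsetSum _ fun r _ => integrable_finsetSum _ fun s _ => hint' r s]
    refine sum_congr rfl fun r _ => ?_
    rw [integral_finsetSum _ fun s _ => hint' r s]
    simp only [integral_mul_const]
  rw [this]
  exact integral_nonneg_of_ae (hF.mono fun u hu => hu N t c)

end IsAddPosSemidef

lemma sum_sum_ofReal_mul_mul_conj {N : ℕ} (K : Fin N → Fin N → ℝ) (hK : ∀ r s, K r s = K s r)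
    (ξ : Fin N → ℂ) :
    ∑ r, ∑ s, (K r s : ℂ) * ξ r * (starRingEnd ℂ) (ξ s)
      = ((∑ r, ∑ s, K r s * (ξ r).re * (ξ s).re
          + ∑ r, ∑ s, K r s * (ξ r).im * (ξ s).im : ℝ) : ℂ) := by
  apply Complex.ext
  · simp only [Complex.re_sum, Complex.mul_re, Complex.ofReal_re, Complex.ofReal_im,
      Complex.conj_re, Complex.conj_im, Complex.mul_im, ← sum_add_distrib]
    exact sum_congr rfl fun r _ => sum_congr rfl fun s _ => by ring
  · simp only [Complex.im_sum, Complex.mul_re, Complex.ofReal_re, Complex.ofReal_im,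
      Complex.conj_re, Complex.conj_im, Complex.mul_im]
    have hsymm : ∑ r, ∑ s, K r s * (ξ r).im * (ξ s).re = ∑ r, ∑ s, K r s * (ξ r).re * (ξ s).im := by
      rw [sum_comm]
      exact sum_congr rfl fun r _ => sum_congr rfl fun s _ => by rw [hK]; ring
    calc _ = ∑ r, ∑ s, K r s * (ξ r).im * (ξ s).re - ∑ r, ∑ s, K r s * (ξ r).re * (ξ s).im := by
          rw [← sum_sub_distrib]
          exact sum_congr rfl fun r _ => by
            rw [← sum_sub_distrib]; exact sum_congr rfl fun s _ => by ring
      _ = 0 := by rw [hsymm, sub_self]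

lemma ExpConvex.of_isAddPosSemidef {f : ℝ → ℝ} (hc : Continuous f) (hf : IsAddPosSemidef f) :
    ExpConvex f := by
  refine ⟨hc, fun N t ξ => ?_⟩
  rw [sum_sum_ofReal_mul_mul_conj (fun r s => f (t r + t s)) (fun r s => by rw [add_comm]),
    Complex.zero_le_real]
  exact add_nonneg (hf N t _) (hf N t _)

lemma integral_pow_mul_one_sub_sq_pow_of_odd {m : ℕ} (hm : Odd m) (j : ℕ) :
    ∫ u in (-1:ℝ)..1, u ^ m * (1 - u ^ 2) ^ j = 0 := by
  have h := intervalIntegral.integral_comp_neg (a := -1) (b := 1)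
    fun u : ℝ => u ^ m * (1 - u ^ 2) ^ j
  simp only [hm.neg_pow, even_two.neg_pow, neg_mul, intervalIntegral.integral_neg, neg_neg] at h
  linarith

lemma integral_pow_mul_one_sub_sq_pow_succ (n j : ℕ) :
    ∫ u in (-1:ℝ)..1, u ^ (2 * n) * (1 - u ^ 2) ^ (j + 1)
      = (2 * j + 2 : ℝ) / (2 * n + 1) * ∫ u in (-1:ℝ)..1, u ^ (2 * (n + 1)) * (1 - u ^ 2) ^ j := by
  have hu : ∀ x ∈ uIcc (-1:ℝ) 1, HasDerivAt (fun u : ℝ => (1 - u ^ 2) ^ (j + 1))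
      (-(2 * (j + 1)) * x * (1 - x ^ 2) ^ j) x := fun x _ => by
    refine (((hasDerivAt_pow 2 x).const_sub 1).fun_pow (j + 1)).congr_deriv ?_
    simp only [Nat.cast_add, Nat.cast_one, Nat.cast_ofNat, Nat.add_one_sub_one, pow_one]
    ring
  have hv : ∀ x ∈ uIcc (-1:ℝ) 1, HasDerivAt (fun u : ℝ => u ^ (2 * n + 1) / (2 * n + 1))
      (x ^ (2 * n)) x := fun x _ => by
    refine ((hasDerivAt_pow (2 * n + 1) x).div_const (2 * (n : ℝ) + 1)).congr_deriv ?_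
    push_cast
    field_simp
  have hibp := intervalIntegral.integral_mul_deriv_eq_deriv_mul hu hv
    (by apply Continuous.intervalIntegrable; fun_prop)
    (by apply Continuous.intervalIntegrable; fun_prop)
  calc _ = ∫ u in (-1:ℝ)..1, (1 - u ^ 2) ^ (j + 1) * u ^ (2 * n) :=
        intervalIntegral.integral_congr fun u _ => mul_comm _ _
    _ = -∫ u in (-1:ℝ)..1,
          -(2 * (j + 1)) * u * (1 - u ^ 2) ^ j * (u ^ (2 * n + 1) / (2 * n + 1)) := by
        rw [hibp]; simp
    _ = _ := by
        rw [← intervalIntegral.integral_const_mul, ← intervalIntegral.integral_neg]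
        refine intervalIntegral.integral_congr fun u _ => ?_
        field_simp
        ring

lemma integral_even_pow_mul_one_sub_sq_pow (j n : ℕ) :
    ∫ u in (-1:ℝ)..1, u ^ (2 * n) * (1 - u ^ 2) ^ j
      = (4 : ℝ) ^ (j + 1) * j ! * (j + 1 + n)! * (2 * n)! / (n ! * (2 * (j + 1 + n))!) := by
  induction j generalizing n with
  | zero =>
    rw [show 0 + 1 + n = n + 1 by ring, show 2 * (n + 1) = 2 * n + 1 + 1 by ring]
    simp only [pow_zero, mul_one, integral_pow, Nat.factorial_succ, Odd.neg_pow ⟨n, rfl⟩]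
    push_cast
    field_simp
    ring
  | succ j ih =>
    rw [integral_pow_mul_one_sub_sq_pow_succ, ih, show j + 1 + (n + 1) = j + 1 + 1 + n by ring,
      show 2 * (n + 1) = 2 * n + 1 + 1 by ring]
    simp only [Nat.factorial_succ]
    push_cast
    field_simp
    ring

noncomputable def bumpLaplace (j : ℕ) (x : ℝ) : ℝ :=
  ∫ u in (-1:ℝ)..1, (1 - u ^ 2) ^ j * exp (x * u)

lemma hasSum_bumpLaplace (j : ℕ) (x : ℝ) :
    HasSum (fun n => x ^ (2 * n) / (2 * n)! * ∫ u in (-1:ℝ)..1, u ^ (2 * n) * (1 - u ^ 2) ^ j)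
      (bumpLaplace j x) := by
  have hexp : ∀ y : ℝ, HasSum (fun m => y ^ m / m !) (exp y) := fun y => by
    rw [exp_eq_exp_ℝ]; exact NormedSpace.expSeries_div_hasSum_exp y
  have hbound : ∀ m, ∀ u ∈ uIoc (-1:ℝ) 1,
      ‖(1 - u ^ 2) ^ j * ((x * u) ^ m / m !)‖ ≤ |x| ^ m / m ! := by
    intro m u hu
    rw [uIoc_of_le (by norm_num)] at hu
    have h0 : 0 ≤ 1 - u ^ 2 := by nlinarith [hu.1, hu.2]
    have hxu : |x * u| ≤ |x| := by
      rw [abs_mul]; exact mul_le_of_le_one_right (abs_nonneg _) (abs_le.2 ⟨hu.1.le, hu.2⟩)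
    rw [norm_mul, norm_div, norm_pow, norm_pow, Real.norm_of_nonneg h0, Real.norm_eq_abs,
      Real.norm_natCast]
    calc (1 - u ^ 2) ^ j * (|x * u| ^ m / m !) ≤ 1 * (|x| ^ m / m !) := by
          gcongr; exact pow_le_one₀ h0 (by nlinarith)
      _ = |x| ^ m / m ! := one_mul _
  have hall : HasSum (fun m => ∫ u in (-1:ℝ)..1, (1 - u ^ 2) ^ j * ((x * u) ^ m / m !))
      (bumpLaplace j x) :=
    intervalIntegral.hasSum_integral_of_dominated_convergence (fun m _ => |x| ^ m / m !)
      (fun m => (by fun_prop : Continuous _).aestronglyMeasurable)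
      (fun m => .of_forall (hbound m)) (.of_forall fun _ _ => summable_pow_div_factorial |x|)
      intervalIntegrable_const (.of_forall fun u _ => (hexp (x * u)).mul_left _)
  have hmoment : ∀ m, ∫ u in (-1:ℝ)..1, (1 - u ^ 2) ^ j * ((x * u) ^ m / m !)
      = x ^ m / m ! * ∫ u in (-1:ℝ)..1, u ^ m * (1 - u ^ 2) ^ j := fun m => by
    rw [← intervalIntegral.integral_const_mul]
    exact intervalIntegral.integral_congr fun u _ => by ring
  simp only [hmoment] at hall
  have hvanish : ∀ m ∉ range fun n => 2 * n,
      x ^ m / m ! * ∫ u in (-1:ℝ)..1, u ^ m * (1 - u ^ 2) ^ j = 0 := fun m hm => by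
    have hodd : Odd m := Nat.not_even_iff_odd.mp fun ⟨k, hk⟩ => hm ⟨k, by simp only; omega⟩
    rw [integral_pow_mul_one_sub_sq_pow_of_odd hodd, mul_zero]
  exact ((mul_right_injective₀ two_ne_zero).hasSum_iff hvanish).mpr hall

noncomputable def coshSqrtTerm (b x : ℝ) (p : ℕ × ℕ) : ℝ :=
  (p.1 + p.2).choose p.1 * b ^ p.1 * (x ^ 2) ^ p.2 / (2 * (p.1 + p.2))!

lemma coshSqrtTerm_nonneg {b : ℝ} (hb : 0 ≤ b) (x : ℝ) (p : ℕ × ℕ) : 0 ≤ coshSqrtTerm b x p := by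
  unfold coshSqrtTerm; positivity

lemma sum_antidiagonal_coshSqrtTerm {b : ℝ} (hb : 0 ≤ b) (x : ℝ) (k : ℕ) :
    ∑ p ∈ antidiagonal k, coshSqrtTerm b x p = √(x ^ 2 + b) ^ (2 * k) / (2 * k)! := by
  rw [pow_mul, sq_sqrt (by positivity), add_comm, (Commute.all _ _).add_pow', sum_div]
  refine sum_congr rfl fun p hp => ?_
  rw [Finset.HasAntidiagonal.mem_antidiagonal] at hp
  subst hp
  simp only [coshSqrtTerm, nsmul_eq_mul, mul_assoc]

lemma hasSum_coshSqrtTerm {b : ℝ} (hb : 0 ≤ b) (x : ℝ) :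
    HasSum (coshSqrtTerm b x) (cosh √(x ^ 2 + b)) := by
  let e := Finset.HasAntidiagonal.sigmaAntidiagonalEquivProd (A := ℕ)
  have hfiber : ∀ k, HasSum (fun p : antidiagonal k => coshSqrtTerm b x (e ⟨k, p⟩))
      (√(x ^ 2 + b) ^ (2 * k) / (2 * k)!) := fun k => by
    rw [← sum_antidiagonal_coshSqrtTerm hb]; exact (antidiagonal k).hasSum _
  have hsummable : Summable (coshSqrtTerm b x ∘ e) :=
    (summable_sigma_of_nonneg fun _ => coshSqrtTerm_nonneg hb x _).2
      ⟨fun k => (hfiber k).summable,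
        by simpa only [(hfiber _).tsum_eq] using (hasSum_cosh _).summable⟩
  rw [← e.hasSum_iff, ← (hsummable.hasSum.sigma hfiber).unique (hasSum_cosh _)]
  exact hsummable.hasSum

noncomputable def coshSqrtCoeff (b : ℝ) (j : ℕ) : ℝ :=
  b ^ (j + 1) / (4 ^ (j + 1) * ((j + 1)! * j !))

lemma coshSqrtCoeff_nonneg {b : ℝ} (hb : 0 ≤ b) (j : ℕ) : 0 ≤ coshSqrtCoeff b j := by
  unfold coshSqrtCoeff; positivity

lemma hasSum_coshSqrtTerm_zero (b x : ℝ) : HasSum (fun n => coshSqrtTerm b x (0, n)) (cosh x) :=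
  (hasSum_cosh x).congr_fun fun n => by simp [coshSqrtTerm, ← pow_mul]

lemma hasSum_coshSqrtTerm_succ (b x : ℝ) (j : ℕ) :
    HasSum (fun n => coshSqrtTerm b x (j + 1, n)) (coshSqrtCoeff b j * bumpLaplace j x) := by
  refine ((hasSum_bumpLaplace j x).mul_left _).congr_fun fun n => ?_
  rw [integral_even_pow_mul_one_sub_sq_pow, coshSqrtTerm, coshSqrtCoeff, Nat.cast_add_choose,
    pow_mul]
  field_simp

lemma hasSum_coshSqrtCoeff_mul_bumpLaplace {b : ℝ} (hb : 0 ≤ b) (x : ℝ) :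
    HasSum (fun j => coshSqrtCoeff b j * bumpLaplace j x) (cosh √(x ^ 2 + b) - cosh x) := by
  have hfiber : ∀ m, HasSum (fun n => coshSqrtTerm b x (m, n)) (∑' n, coshSqrtTerm b x (m, n))
    | 0 => (hasSum_coshSqrtTerm_zero b x).summable.hasSum
    | j + 1 => (hasSum_coshSqrtTerm_succ b x j).summable.hasSum
  have h := (hasSum_nat_add_iff' 1).mpr ((hasSum_coshSqrtTerm hb x).prod_fiberwise hfiber)
  rw [sum_range_one, (hasSum_coshSqrtTerm_zero b x).tsum_eq] at h
  exact h.congr_fun fun j => (hasSum_coshSqrtTerm_succ b x j).tsum_eq.symm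

lemma isAddPosSemidef_exp_mul (u : ℝ) : IsAddPosSemidef fun x => exp (x * u) :=
  .of_map_add_eq_mul fun x y => by rw [add_mul, exp_add]

lemma isAddPosSemidef_cosh : IsAddPosSemidef cosh := by
  have h := ((isAddPosSemidef_exp_mul 1).const_mul (a := 2⁻¹) (by norm_num)).add
    ((isAddPosSemidef_exp_mul (-1)).const_mul (a := 2⁻¹) (by norm_num))
  convert h using 1
  ext x
  simp only [cosh_eq, Pi.add_apply, mul_one, mul_neg_one]
  ring

lemma isAddPosSemidef_bumpLaplace (j : ℕ) : IsAddPosSemidef (bumpLaplace j) := by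
  have h : bumpLaplace j = fun x => ∫ u in Ioc (-1:ℝ) 1, (1 - u ^ 2) ^ j * exp (x * u) :=
    funext fun x => intervalIntegral.integral_of_le (by norm_num)
  rw [h]
  refine .integral ?_ fun x => (by fun_prop : Continuous _).integrableOn_Ioc
  filter_upwards [ae_restrict_mem measurableSet_Ioc] with u hu
  exact (isAddPosSemidef_exp_mul u).const_mul (pow_nonneg (by nlinarith [hu.1, hu.2]) j)

lemma isAddPosSemidef_cosh_sqrt_sq_add {b : ℝ} (hb : 0 ≤ b) :
    IsAddPosSemidef fun x => cosh √(x ^ 2 + b) := by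
  have h : IsAddPosSemidef fun x => cosh √(x ^ 2 + b) - cosh x :=
    .of_hasSum (fun j => (isAddPosSemidef_bumpLaplace j).const_mul (coshSqrtCoeff_nonneg hb j))
      (hasSum_coshSqrtCoeff_mul_bumpLaplace hb)
  convert isAddPosSemidef_cosh.add h using 1
  ext x
  simp only [Pi.add_apply, add_sub_cancel]

theorem stmt2 (a b : ℝ) (ha : 0 ≤ a) (hb : 0 ≤ b) :
    ExpConvex (fun t : ℝ => Real.cosh (Real.sqrt (a * t ^ 2 + b))) := by
  refine .of_isAddPosSemidef (by fun_prop) ?_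
  convert (isAddPosSemidef_cosh_sqrt_sq_add hb).comp_mul_left √a using 4 with t
  rw [mul_pow, sq_sqrt ha]
end

section
/- Let A and B be Hermitian 2×2 complex matrices. Then there exist Hermitian 2×2 matrices A₀ and B₀ satisfying trace(A₀) = 0, trace(B₀) = 0 and trace(A₀·B₀) = 0, together with real numbers λ and t₀ and a real number c > 0, such that trace(exp(t·A + B)) = c·e^{tλ}·trace(exp((t + t₀)·A₀ + B₀)) holds for every real number t. -/
/-!
Write `A = a • 1 + A₀` and `B = b • 1 + B₁` with `A₀`, `B₁` traceless. Scalar matrices are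
central, so they split off the exponential as the factor `e^{t a + b}`. Projecting `B₁`
orthogonally to `A₀` for the Hilbert–Schmidt inner product `tr (X Y)` gives
`B₁ = t₀ • A₀ + B₀` with `tr (A₀ B₀) = 0`, and then `t • A₀ + B₁ = (t + t₀) • A₀ + B₀`.
-/

open Matrix NormedSpace

namespace Matrix

variable {n : Type*}

lemma IsHermitian.ofReal_smul {A : Matrix n n ℂ} (hA : A.IsHermitian) (r : ℝ) :
    ((r : ℂ) • A).IsHermitian :=
  hA.smul (Complex.conj_ofReal r)

variable [Fintype n]

lemma IsHermitian.ofReal_re_trace {A : Matrix n n ℂ} (hA : A.IsHermitian) :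
    (A.trace.re : ℂ) = A.trace :=
  Complex.conj_eq_iff_re.mp (by rw [← Complex.star_def, ← trace_conjTranspose, hA.eq])

lemma IsHermitian.ofReal_re_trace_mul {A B : Matrix n n ℂ} (hA : A.IsHermitian)
    (hB : B.IsHermitian) : ((A * B).trace.re : ℂ) = (A * B).trace :=
  Complex.conj_eq_iff_re.mp <| by
    rw [← Complex.star_def, ← trace_conjTranspose, conjTranspose_mul, hA.eq, hB.eq,
      trace_mul_comm]

open scoped ComplexOrder in
lemma IsHermitian.trace_mul_self_eq_zero_iff {A : Matrix n n ℂ} (hA : A.IsHermitian) :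
    (A * A).trace = 0 ↔ A = 0 := by
  simpa only [hA.eq] using trace_conjTranspose_mul_self_eq_zero_iff (A := A)

variable [DecidableEq n]

lemma exp_smul_one_add (z : ℂ) (M : Matrix n n ℂ) :
    exp (z • (1 : Matrix n n ℂ) + M) = Complex.exp z • exp M := by
  rw [exp_add_of_commute _ _ ((Commute.one_left M).smul_left z), smul_one_eq_diagonal,
    exp_diagonal, Pi.exp_def, ← Complex.exp_eq_exp_ℂ, ← smul_one_eq_diagonal, smul_one_mul]

lemma IsHermitian.exists_eq_smul_one_add_traceless {A : Matrix n n ℂ} (hA : A.IsHermitian) :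
    ∃ (a : ℝ) (A₀ : Matrix n n ℂ), A₀.IsHermitian ∧ A₀.trace = 0 ∧ A = (a : ℂ) • 1 + A₀ := by
  refine ⟨A.trace.re / Fintype.card n, A - _, hA.sub (isHermitian_one.ofReal_smul _), ?_,
    (add_sub_cancel _ _).symm⟩
  rcases isEmpty_or_nonempty n with hn | hn
  · simp [trace]
  · have hcard : (Fintype.card n : ℂ) ≠ 0 := by exact_mod_cast Fintype.card_ne_zero
    simp [trace_sub, hA.ofReal_re_trace, hcard]

lemma IsHermitian.exists_eq_smul_add_trace_mul_eq_zero {A B : Matrix n n ℂ}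
    (hA : A.IsHermitian) (hB : B.IsHermitian) :
    ∃ (s : ℝ) (B₀ : Matrix n n ℂ), B₀.IsHermitian ∧ (A * B₀).trace = 0 ∧
      B = (s : ℂ) • A + B₀ := by
  refine ⟨(A * B).trace.re / (A * A).trace.re, B - _, hB.sub (hA.ofReal_smul _), ?_,
    (add_sub_cancel _ _).symm⟩
  by_cases h0 : A = 0
  · simp [h0]
  have hAA : (A * A).trace ≠ 0 := mt hA.trace_mul_self_eq_zero_iff.mp h0
  rw [mul_sub, trace_sub, mul_smul_comm, trace_smul, smul_eq_mul]
  push_cast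
  rw [hA.ofReal_re_trace_mul hB, hA.ofReal_re_trace_mul hA, div_mul_cancel₀ _ hAA, sub_self]

lemma IsHermitian.exists_pencil_eq_smul_one_add_traceless_orthogonal {A B : Matrix n n ℂ}
    (hA : A.IsHermitian) (hB : B.IsHermitian) :
    ∃ (A₀ B₀ : Matrix n n ℂ) (a b t₀ : ℝ), A₀.IsHermitian ∧ B₀.IsHermitian ∧
      A₀.trace = 0 ∧ B₀.trace = 0 ∧ (A₀ * B₀).trace = 0 ∧
      ∀ t : ℝ, (t : ℂ) • A + B = ((t * a + b : ℝ) : ℂ) • 1 + (((t + t₀ : ℝ) : ℂ) • A₀ + B₀) := by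
  obtain ⟨a, A₀, hA₀, htrA₀, rfl⟩ := hA.exists_eq_smul_one_add_traceless
  obtain ⟨b, B₁, hB₁, htrB₁, rfl⟩ := hB.exists_eq_smul_one_add_traceless
  obtain ⟨t₀, B₀, hB₀, htrAB₀, rfl⟩ := hA₀.exists_eq_smul_add_trace_mul_eq_zero hB₁
  refine ⟨A₀, B₀, a, b, t₀, hA₀, hB₀, htrA₀, ?_, htrAB₀, fun t => ?_⟩
  · simpa [trace_add, trace_smul, htrA₀] using htrB₁
  · push_cast
    module

end Matrix

theorem stmt4 (A B : Matrix (Fin 2) (Fin 2) ℂ)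
    (hA : A.IsHermitian) (hB : B.IsHermitian) :
    ∃ (A₀ B₀ : Matrix (Fin 2) (Fin 2) ℂ) (lam t₀ c : ℝ),
      A₀.IsHermitian ∧ B₀.IsHermitian ∧
      A₀.trace = 0 ∧ B₀.trace = 0 ∧ (A₀ * B₀).trace = 0 ∧ 0 < c ∧
      ∀ t : ℝ, (exp ((t : ℂ) • A + B)).trace =
        (c : ℂ) * (Real.exp (t * lam) : ℝ) *
          (exp (((t + t₀ : ℝ) : ℂ) • A₀ + B₀)).trace := by
  obtain ⟨A₀, B₀, a, b, t₀, hA₀, hB₀, htrA₀, htrB₀, htrAB₀, hpencil⟩ :=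
    hA.exists_pencil_eq_smul_one_add_traceless_orthogonal hB
  refine ⟨A₀, B₀, a, t₀, Real.exp b, hA₀, hB₀, htrA₀, htrB₀, htrAB₀, Real.exp_pos b,
    fun t => ?_⟩
  rw [hpencil, exp_smul_one_add, trace_smul, smul_eq_mul, ← Complex.ofReal_exp,
    Real.exp_add]
  push_cast
  ring
end

section
/- Let A₀ and B₀ be Hermitian 2×2 complex matrices satisfying trace(A₀) = 0, trace(B₀) = 0, trace(A₀·B₀) = 0, and A₀ ≠ 0. Then there exist a unitary 2×2 matrix U and real numbers α > 0 and β ≥ 0 such that U·A₀·U* = α·σ and U·B₀·U* = β·τ, where σ = [[1,0],[0,-1]] and τ = [[0,1],[1,0]] are the Pauli matrices. -/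
/-!
Conjugation by a unitary `U` is a ⋆-algebra automorphism preserving traces, so all hypotheses
survive it. By the spectral theorem `A₀` is unitarily diagonal; being traceless, its eigenvalues
are `±α` with `α ≠ 0`, and conjugating by `τ` (which swaps them) if necessary gives `α σ` with
`α > 0`. The conjugate `B` of `B₀` is then Hermitian with `tr B = tr (σ B) = 0`, i.e.
`B = [[0, b], [b̄, 0]]`. Finally the phase unitary `diag(e^{-i arg b}, 1)` fixes `σ` and turns
`B` into `|b| τ`.
-/

open Matrix

open Unitary

section
variable {n R : Type*} [Fintype n] [DecidableEq n] [CommRing R] [StarRing R]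

theorem Matrix.trace_conjStarAlgAut (U : unitaryGroup n R) (A : Matrix n n R) :
    (conjStarAlgAut R _ U A).trace = A.trace := by
  rw [conjStarAlgAut_apply, trace_mul_cycle, coe_star_mul_self, one_mul]

theorem Matrix.IsHermitian.conjStarAlgAut {A : Matrix n n R} (hA : A.IsHermitian)
    (U : unitaryGroup n R) : (conjStarAlgAut R _ U A).IsHermitian := by
  simpa [star_eq_conjTranspose] using isHermitian_mul_mul_conjTranspose (U : Matrix n n R) hA

end

theorem pauliτ_mem_unitaryGroup : pauliτ ∈ unitaryGroup (Fin 2) ℂ := by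
  rw [mem_unitaryGroup_iff, star_eq_conjTranspose, pauliτ]
  ext i j; fin_cases i <;> fin_cases j <;> simp [mul_apply]

theorem pauliτ_mul_pauliσ_mul_pauliτ : pauliτ * pauliσ * pauliτ = -pauliσ := by
  ext i j; fin_cases i <;> fin_cases j <;> simp [pauliσ, pauliτ, mul_apply]

theorem diagonal_eq_smul_pauliσ {d : Fin 2 → ℂ} (hd : d 0 + d 1 = 0) :
    diagonal d = d 0 • pauliσ := by
  ext i j; fin_cases i <;> fin_cases j <;> simp [pauliσ, eq_neg_of_add_eq_zero_right hd]

theorem trace_pauliσ_mul (B : Matrix (Fin 2) (Fin 2) ℂ) :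
    (pauliσ * B).trace = B 0 0 - B 1 1 := by
  simp [pauliσ, trace_fin_two, vecMul, dotProduct, Fin.sum_univ_two, sub_eq_add_neg]

theorem exists_conjStarAlgAut_eq_smul_pauliσ {A : Matrix (Fin 2) (Fin 2) ℂ} (hA : A.IsHermitian)
    (htr : A.trace = 0) (hA0 : A ≠ 0) :
    ∃ (U : unitaryGroup (Fin 2) ℂ) (α : ℝ), 0 < α ∧ conjStarAlgAut ℂ _ U A = (α : ℂ) • pauliσ := by
  set e := hA.eigenvalues
  have he : (e 0 : ℂ) + e 1 = 0 := by
    have := hA.trace_eq_sum_eigenvalues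
    rwa [htr, Fin.sum_univ_two, eq_comm] at this
  have he0 : e 0 ≠ 0 := by
    intro h0
    have h1 : e 1 = 0 := by simpa [h0] using he
    exact hA0 (hA.eigenvalues_eq_zero_iff.mp (funext fun i ↦ by fin_cases i <;> assumption))
  have hdiag : conjStarAlgAut ℂ _ (star hA.eigenvectorUnitary) A = (e 0 : ℂ) • pauliσ := by
    rw [hA.conjStarAlgAut_star_eigenvectorUnitary]
    exact diagonal_eq_smul_pauliσ he
  rcases he0.lt_or_gt with hneg | hpos
  · refine ⟨⟨pauliτ, pauliτ_mem_unitaryGroup⟩ * star hA.eigenvectorUnitary, -e 0, by linarith, ?_⟩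
    have hτ : star pauliτ = pauliτ := by
      ext i j; fin_cases i <;> fin_cases j <;> simp [pauliτ]
    rw [conjStarAlgAut_mul_apply, hdiag, map_smul, conjStarAlgAut_apply]
    simp [hτ, pauliτ_mul_pauliσ_mul_pauliτ]
  · exact ⟨_, _, hpos, hdiag⟩

theorem eq_of_trace_eq_zero_of_trace_pauliσ_mul_eq_zero {B : Matrix (Fin 2) (Fin 2) ℂ}
    (hB : B.IsHermitian) (htr : B.trace = 0) (hσ : (pauliσ * B).trace = 0) :
    B = !![0, B 0 1; star (B 0 1), 0] := by
  rw [trace_pauliσ_mul] at hσ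
  rw [trace_fin_two] at htr
  have h10 : B 1 0 = star (B 0 1) := (hB.apply 1 0).symm
  ext i j; fin_cases i <;> fin_cases j <;> simp [h10]
  · linear_combination (htr + hσ) / 2
  · linear_combination (htr - hσ) / 2

theorem exists_conjStarAlgAut_offDiagonal_eq_smul_pauliτ (b : ℂ) :
    ∃ D : unitaryGroup (Fin 2) ℂ, conjStarAlgAut ℂ _ D pauliσ = pauliσ ∧
      conjStarAlgAut ℂ _ D !![0, b; star b, 0] = (‖b‖ : ℂ) • pauliτ := by
  set w := Complex.exp (-(b.arg * Complex.I))
  have hw : w * starRingEnd ℂ w = 1 := by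
    rw [← Complex.exp_conj, ← Complex.exp_add]
    simp
  have hwb : w * b = ‖b‖ := by
    conv_lhs => rw [← Complex.norm_mul_exp_arg_mul_I b]
    rw [mul_left_comm, ← Complex.exp_add, neg_add_cancel, Complex.exp_zero, mul_one]
  have hwb' : starRingEnd ℂ b * starRingEnd ℂ w = ‖b‖ := by
    simpa [mul_comm] using congrArg (starRingEnd ℂ) hwb
  have hD : diagonal ![w, 1] ∈ unitaryGroup (Fin 2) ℂ := by
    rw [mem_unitaryGroup_iff, star_eq_conjTranspose, diagonal_conjTranspose, diagonal_mul_diagonal]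
    ext i j; fin_cases i <;> fin_cases j <;> simp [hw]
  refine ⟨⟨_, hD⟩, ?_, ?_⟩ <;>
    simp only [conjStarAlgAut_apply, star_eq_conjTranspose, diagonal_conjTranspose] <;> ext i j
  · fin_cases i <;> fin_cases j <;> simp [pauliσ, mul_apply, Fin.sum_univ_two, hw]
  · fin_cases i <;> fin_cases j <;> simp [pauliτ, mul_apply, Fin.sum_univ_two, hwb, hwb']

theorem exists_conjStarAlgAut_eq_smul_pauliτ {B : Matrix (Fin 2) (Fin 2) ℂ} (hB : B.IsHermitian)
    (htr : B.trace = 0) (hσ : (pauliσ * B).trace = 0) :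
    ∃ (D : unitaryGroup (Fin 2) ℂ) (β : ℝ), 0 ≤ β ∧ conjStarAlgAut ℂ _ D pauliσ = pauliσ ∧
      conjStarAlgAut ℂ _ D B = (β : ℂ) • pauliτ := by
  obtain ⟨D, hDσ, hDB⟩ := exists_conjStarAlgAut_offDiagonal_eq_smul_pauliτ (B 0 1)
  refine ⟨D, _, norm_nonneg (B 0 1), hDσ, ?_⟩
  rwa [eq_of_trace_eq_zero_of_trace_pauliσ_mul_eq_zero hB htr hσ]

theorem stmt5 (A₀ B₀ : Matrix (Fin 2) (Fin 2) ℂ)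
    (hA : A₀.IsHermitian) (hB : B₀.IsHermitian)
    (htrA : A₀.trace = 0) (htrB : B₀.trace = 0) (htrAB : (A₀ * B₀).trace = 0)
    (hA0 : A₀ ≠ 0) :
    ∃ (U : Matrix (Fin 2) (Fin 2) ℂ) (α β : ℝ),
      U * Uᴴ = 1 ∧ 0 < α ∧ 0 ≤ β ∧
      U * A₀ * Uᴴ = (α : ℂ) • pauliσ ∧ U * B₀ * Uᴴ = (β : ℂ) • pauliτ := by
  obtain ⟨U, α, hα, hUA⟩ := exists_conjStarAlgAut_eq_smul_pauliσ hA htrA hA0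
  have hσB : (pauliσ * conjStarAlgAut ℂ _ U B₀).trace = 0 := by
    have : (α : ℂ) • (pauliσ * conjStarAlgAut ℂ _ U B₀).trace = 0 := by
      rw [← trace_smul, ← smul_mul_assoc, ← hUA, ← map_mul, trace_conjStarAlgAut, htrAB]
    exact (smul_eq_zero.mp this).resolve_left (by exact_mod_cast hα.ne')
  obtain ⟨D, β, hβ, hDσ, hDB⟩ := exists_conjStarAlgAut_eq_smul_pauliτ (hB.conjStarAlgAut U)
    (by rw [trace_conjStarAlgAut, htrB]) hσB
  have hconj (X) : ((D * U : unitaryGroup (Fin 2) ℂ) : Matrix (Fin 2) (Fin 2) ℂ) * X *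
      (D * U : unitaryGroup (Fin 2) ℂ)ᴴ = conjStarAlgAut ℂ _ D (conjStarAlgAut ℂ _ U X) := by
    rw [← conjStarAlgAut_mul_apply, conjStarAlgAut_apply, star_eq_conjTranspose]
  refine ⟨↑(D * U), α, β, mem_unitaryGroup_iff.mp (D * U).2, hα, hβ, ?_, ?_⟩
  · rw [hconj, hUA, map_smul, hDσ]
  · rw [hconj, hDB]
end

section
/- Let f : ℝ → ℝ be exponentially convex. Then for all real numbers t₁ and t₂ one has f(t₁ + t₂)² ≤ f(2t₁)·f(2t₂), and consequently the following alternative holds: either f(t) = 0 for every real t, or f(t) > 0 for every real t. -/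
open ComplexOrder

lemma expconvex_quad (f : ℝ → ℝ) (hf : ExpConvex f) (t₁ t₂ a b : ℝ) :
    0 ≤ f (2*t₁) * a * a + 2 * f (t₁+t₂) * a * b + f (2*t₂) * b * b := by
  have h := hf.2 2 ![t₁, t₂] ![(a:ℂ), (b:ℂ)]
  have h' := (Complex.le_def.mp h).1
  simp [Fin.sum_univ_two] at h'
  have : f (t₂ + t₁) = f (t₁ + t₂) := by ring_nf
  have e1 : t₁ + t₁ = 2*t₁ := by ring
  have e2 : t₂ + t₂ = 2*t₂ := by ring
  rw [this, e1, e2] at h'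
  linarith [h']

lemma expconvex_nonneg (f : ℝ → ℝ) (hf : ExpConvex f) (t : ℝ) : 0 ≤ f t := by
  have h := expconvex_quad f hf (t/2) (t/2) 1 0
  have e : 2 * (t/2) = t := by ring
  simpa [e] using h

lemma expconvex_sq (f : ℝ → ℝ) (hf : ExpConvex f) (t₁ t₂ : ℝ) :
    f (t₁ + t₂) ^ 2 ≤ f (2 * t₁) * f (2 * t₂) := by
  have h : discrim (f (2*t₁)) (2 * f (t₁+t₂)) (f (2*t₂)) ≤ 0 := by
    apply discrim_le_zero
    intro x
    have := expconvex_quad f hf t₁ t₂ x 1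
    linarith
  rw [discrim] at h
  nlinarith [h]

theorem stmt8 (f : ℝ → ℝ) (hf : ExpConvex f) :
    (∀ t₁ t₂ : ℝ, f (t₁ + t₂) ^ 2 ≤ f (2 * t₁) * f (2 * t₂)) ∧
    ((∀ t : ℝ, f t = 0) ∨ (∀ t : ℝ, 0 < f t)) := by
  refine ⟨expconvex_sq f hf, ?_⟩
  by_cases hz : ∃ s, f s = 0
  · obtain ⟨s, hs⟩ := hz
    left
    intro t
    have h := expconvex_sq f hf (t - s/2) (s/2)
    have e1 : t - s/2 + s/2 = t := by ring
    have e2 : 2 * (s/2) = s := by ring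
    rw [e1, e2, hs, mul_zero] at h
    have := expconvex_nonneg f hf t
    nlinarith
  · right
    push_neg at hz
    intro t
    exact lt_of_le_of_ne (expconvex_nonneg f hf t) (Ne.symm (hz t))
end

section
/- Let (f_n)_{n≥1} be a sequence of exponentially convex functions on ℝ such that for every real t the limit f(t) = lim_{n→∞} f_n(t) exists (and is finite). Then the limit function f is exponentially convex; in particular, f is continuous on ℝ. -/
open ComplexOrder Filter

/-!
Evaluating the quadratic form at the nodes `x/2, y/2` with `ξ = (1, -1)` gives
`f x - 2 f((x+y)/2) + f y ≥ 0`, so every exponentially convex function is midpoint convex, hence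
(being continuous) convex. Convexity and nonnegativity of the quadratic forms are both closed
conditions for pointwise convergence, so the limit is convex and has nonnegative forms; a convex
function on `ℝ` is continuous.
-/

theorem Set.Icc_subset_of_isClosed_of_midpoint_mem {S : Set ℝ} (hS : IsClosed S)
    (hmid : ∀ a ∈ S, ∀ b ∈ S, (a + b) / 2 ∈ S) {a b : ℝ} (ha : a ∈ S) (hb : b ∈ S) :
    Set.Icc a b ⊆ S := by
  intro c ⟨hac, hcb⟩
  by_contra hc
  -- `s` and `t` are the points of `S` closest to `c` on either side; their midpoint lies strictly
  -- between them, hence in the gap.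
  set s := sSup (S ∩ Set.Icc a c)
  set t := sInf (S ∩ Set.Icc c b)
  have hs : s ∈ S ∩ Set.Icc a c :=
    (hS.inter isClosed_Icc).csSup_mem ⟨a, ha, le_rfl, hac⟩ ⟨c, fun _ hx => hx.2.2⟩
  have ht : t ∈ S ∩ Set.Icc c b :=
    (hS.inter isClosed_Icc).csInf_mem ⟨b, hb, hcb, le_rfl⟩ ⟨c, fun _ hx => hx.2.1⟩
  have hsc : s < c := lt_of_le_of_ne hs.2.2 fun h => hc (h ▸ hs.1)
  have hct : c < t := lt_of_le_of_ne ht.2.1 fun h => hc (h ▸ ht.1)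
  have hm := hmid s hs.1 t ht.1
  rcases le_total ((s + t) / 2) c with hmc | hcm
  · have : (s + t) / 2 ≤ s := le_csSup ⟨c, fun _ hx => hx.2.2⟩ ⟨hm, by linarith [hs.2.1], hmc⟩
    linarith
  · have : t ≤ (s + t) / 2 := csInf_le ⟨c, fun _ hx => hx.2.1⟩ ⟨hm, hcm, by linarith [ht.2.2]⟩
    linarith

theorem convexOn_univ_of_continuous_of_midpoint_le {g : ℝ → ℝ} (hg : Continuous g)
    (hmid : ∀ x y, g ((x + y) / 2) ≤ (g x + g y) / 2) : ConvexOn ℝ Set.univ g := by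
  refine ⟨convex_univ, fun x _ y _ a b ha hb hab => ?_⟩
  obtain rfl : b = 1 - a := by linarith
  let S := {c : ℝ | g (c * x + (1 - c) * y) ≤ c * g x + (1 - c) * g y}
  have hS : IsClosed S := isClosed_le (by fun_prop) (by fun_prop)
  have hSmid : ∀ c ∈ S, ∀ d ∈ S, (c + d) / 2 ∈ S := by
    intro c hc d hd
    calc g ((c + d) / 2 * x + (1 - (c + d) / 2) * y)
        = g (((c * x + (1 - c) * y) + (d * x + (1 - d) * y)) / 2) := by ring_nf
      _ ≤ (g (c * x + (1 - c) * y) + g (d * x + (1 - d) * y)) / 2 := hmid _ _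
      _ ≤ _ := by simp only [S, Set.mem_ofPred_eq] at hc hd; linarith
  have h0 : (0 : ℝ) ∈ S := by simp [S]
  have h1 : (1 : ℝ) ∈ S := by simp [S]
  simpa [S] using Set.Icc_subset_of_isClosed_of_midpoint_mem hS hSmid h0 h1 ⟨ha, by linarith⟩

theorem ExpConvex.midpoint_le {g : ℝ → ℝ} (hg : ExpConvex g) (x y : ℝ) :
    g ((x + y) / 2) ≤ (g x + g y) / 2 := by
  have h := hg.2 2 ![x / 2, y / 2] ![1, -1]
  simp only [Fin.sum_univ_two, Matrix.cons_val_zero, Matrix.cons_val_one, map_one, map_neg,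
    add_halves] at h
  rw [add_comm (y / 2), ← add_div] at h
  have h' : ((0 : ℝ) : ℂ) ≤ ((g x + g y - 2 * g ((x + y) / 2) : ℝ) : ℂ) := by
    push_cast
    convert h using 1
    ring
  linarith [Complex.real_le_real.1 h']

theorem ExpConvex.convexOn {g : ℝ → ℝ} (hg : ExpConvex g) : ConvexOn ℝ Set.univ g :=
  convexOn_univ_of_continuous_of_midpoint_le hg.1 hg.midpoint_le

theorem isClosed_setOf_sum_mul_conj_nonneg :
    IsClosed {g : ℝ → ℝ | ∀ (N : ℕ) (t : Fin N → ℝ) (ξ : Fin N → ℂ),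
      0 ≤ ∑ r, ∑ s, (g (t r + t s) : ℂ) * ξ r * (starRingEnd ℂ) (ξ s)} := by
  simp only [Set.ofPred_forall]
  exact isClosed_iInter fun N => isClosed_iInter fun t => isClosed_iInter fun ξ =>
    isClosed_le continuous_const (by fun_prop)

theorem stmt10 (fn : ℕ → ℝ → ℝ) (hfn : ∀ n : ℕ, ExpConvex (fn n))
    (f : ℝ → ℝ) (hlim : ∀ t : ℝ, Tendsto (fun n : ℕ => fn n t) atTop (nhds (f t))) :
    ExpConvex f := by
  have hfn_tendsto : Tendsto fn atTop (nhds f) := tendsto_pi_nhds.2 hlim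
  have hconv : ConvexOn ℝ Set.univ f :=
    isClosed_setOfPred_convexOn.mem_of_tendsto hfn_tendsto
      (Eventually.of_forall fun n => (hfn n).convexOn)
  exact ⟨continuousOn_univ.1 (hconv.continuousOn isOpen_univ),
    isClosed_setOf_sum_mul_conj_nonneg.mem_of_tendsto hfn_tendsto
      (Eventually.of_forall fun n => (hfn n).2)⟩
end
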